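/- Let s ≥ 0 be an integer. For every odd integer n with n > N_s^odd, the generalized Frobenius number of the three consecutive triangular numbers satisfies g(t_n, t_{n+1}, t_{n+2}; s) = ((n+1)(n+2)/4)·((x_s^odd + 2y_s^odd + 3)n + 3(x_s^odd − 1)) − 1. -/

import Mathlib

open Finset

/-- Number of representations of `m` as `∑ i, a i * x i` with nonnegative integers `x i`
(for positive weights `a i`, every solution satisfies `x i ≤ m`). -/
def repCount {k : ℕ} (a : Fin k → ℕ) (m : ℕ) : ℕ :=
  (Finset.univ.filter (fun x : Fin k → Fin (m + 1) => ∑ i, a i * (x i : ℕ) = m)).card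

/-- Representation count extended to the integers (no representations of negative numbers). -/
def repCountZ {k : ℕ} (a : Fin k → ℕ) (m : ℤ) : ℕ :=
  if 0 ≤ m then repCount a m.toNat else 0

/-- The generalized Frobenius number `g(a; s)`: the largest integer having at most `s`
representations by the tuple `a`. -/
noncomputable def genFrob {k : ℕ} (a : Fin k → ℕ) (s : ℕ) : ℤ :=
  sSup {m : ℤ | repCountZ a m ≤ s}

/-- The `n`-th triangular number `t n = n(n+1)/2`. -/
def t (n : ℕ) : ℕ := n * (n + 1) / 2

/-- `N_s^even = 6⌊√(s+1)⌋ - 6`. -/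
def NEven (s : ℕ) : ℤ := 6 * (Nat.sqrt (s + 1) : ℤ) - 6

/-- `N_s^odd = 6⌊(√(4s+5) - 1)/2⌋ - 3`. -/
def NOdd (s : ℕ) : ℤ := 6 * (((Nat.sqrt (4 * s + 5) - 1) / 2 : ℕ) : ℤ) - 3

/-- `δ_s = 1` if `s ≥ ⌊√s⌋² + ⌊√s⌋`, and `0` otherwise. -/
def deltaS (s : ℕ) : ℤ := if Nat.sqrt s ^ 2 + Nat.sqrt s ≤ s then 1 else 0

/-- `q_s = 2⌊√s⌋ + 2 + δ_s`. -/
def qS (s : ℕ) : ℤ := 2 * (Nat.sqrt s : ℤ) + 2 + deltaS s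

/-- `c_s = s - ⌊√s⌋² - δ_s⌊√s⌋`. -/
def cS (s : ℕ) : ℤ := (s : ℤ) - (Nat.sqrt s : ℤ) ^ 2 - deltaS s * (Nat.sqrt s : ℤ)

/-- For `s = k(k+1) + i` with `0 ≤ i ≤ 2k+1`: `x_s^even`. -/
def xEvenN (k i : ℕ) : ℕ := if i ≤ k then i else i - k - 1

/-- For `s = k(k+1) + i` with `0 ≤ i ≤ 2k+1`: `y_s^even`. -/
def yEvenN (k i : ℕ) : ℕ := if i ≤ k then 2 * (k - i) else 4 * k + 3 - 2 * i

/-- For `s = k(k+1) + i` with `0 ≤ i ≤ 2k+1`: `x_s^odd`. -/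
def xOddN (k i : ℕ) : ℕ := if i ≤ k then 2 * i else 2 * (i - k) - 1

/-- For `s = k(k+1) + i` with `0 ≤ i ≤ 2k+1`: `y_s^odd`. -/
def yOddN (k i : ℕ) : ℕ := if i ≤ k then k - i else 2 * k + 1 - i

/-! Write `n = 2P + 1`, so the weights are `a = (P+1)(2P+1)`, `b = (P+1)(2P+3)`,
`c = (P+2)(2P+3)`. As `a ≡ 1 (mod 2P+3)`, `c ≡ 1 (mod P+1)` and `b` is divisible by both moduli,
every integer is `m = a x₀ + c z₀ + b W` with `x₀ ≤ 2P+2`, `z₀ ≤ P`, and since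
`(2P+3) a = (2P+1) b`, `(P+1) c = (P+2) b`, the representations of `m` are
`(x₀ + (2P+3)u, W - (2P+1)u - (P+2)v, z₀ + (P+1)v)` for the lattice points `(u, v) ∈ ℕ²` with
`(2P+1)u + (P+2)v ≤ W`. So `g(a, b, c; s) = (2P+2) a + P c + (V-1) b`, where `V` is the least `W`
with more than `s` such lattice points.

For `s = k(k+1) + B(k+1) + e` with `B ∈ {0, 1}` and `e ≤ k`, take `V = k(2P+1) + B(P+2) + 3e`.
Because `(P+2)·2 = (2P+1) + 3`, as long as `3k ≤ P+1` (which `n > N_s^odd` guarantees) the lattice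
points below `V` form a staircase whose column `u = k - j` has height `2j + B + [j < e]`, i.e.
exactly `s` points, and adding `V` to the bound adds at least the point `(k - e, 2e + B)`. -/

theorem repCount_eq_ncard {k : ℕ} (a : Fin k → ℕ) (ha : ∀ j, 0 < a j) (m : ℕ) :
    repCount a m = {x : Fin k → ℕ | ∑ j, a j * x j = m}.ncard := by
  have hinj : Function.Injective fun (x : Fin k → Fin (m + 1)) j => (x j : ℕ) :=
    fun x y h => funext fun j => Fin.ext (congrFun h j)
  rw [repCount, ← Set.ncard_coe_finset, ← Set.ncard_image_of_injective _ hinj]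
  congr 1
  ext x
  simp only [coe_filter, mem_univ, true_and, Set.mem_image, Set.mem_ofPred_eq]
  constructor
  · rintro ⟨y, hy, rfl⟩
    exact hy
  · intro hx
    have hle : ∀ j, x j ≤ m := fun j => calc
      x j ≤ a j * x j := Nat.le_mul_of_pos_left _ (ha j)
      _ ≤ ∑ j, a j * x j :=
        single_le_sum (f := fun j => a j * x j) (fun j _ => Nat.zero_le _) (mem_univ j)
      _ = m := hx
    exact ⟨fun j => ⟨x j, Nat.lt_succ_of_le (hle j)⟩, hx, rfl⟩

theorem exists_eq_add_mul_of_dvd_sub {x x₀ d : ℕ} (hx₀ : x₀ < d) (h : (d : ℤ) ∣ x - x₀) :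
    ∃ u, x = x₀ + d * u := by
  have hmod : x₀ % d = x % d := Nat.modEq_iff_dvd.mpr h
  rw [Nat.mod_eq_of_lt hx₀] at hmod
  exact ⟨x / d, by rw [hmod]; exact (Nat.mod_add_div x d).symm⟩

-- `Set.ncard` is `0` on infinite sets, so this counts lattice points only for `0 < α, β`.
noncomputable def latticeCount (α β : ℕ) (W : ℤ) : ℕ :=
  {p : ℕ × ℕ | ((α * p.1 + β * p.2 : ℕ) : ℤ) ≤ W}.ncard

theorem finite_setOf_linear_le {α β : ℕ} (hα : 0 < α) (hβ : 0 < β) (W : ℤ) :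
    {p : ℕ × ℕ | ((α * p.1 + β * p.2 : ℕ) : ℤ) ≤ W}.Finite := by
  refine ((Set.finite_Iic W.toNat).prod (Set.finite_Iic W.toNat)).subset ?_
  rintro ⟨u, v⟩ h
  have hu : u ≤ α * u := Nat.le_mul_of_pos_left u hα
  have hv : v ≤ β * v := Nat.le_mul_of_pos_left v hβ
  simp only [Set.mem_ofPred_eq] at h
  simp only [Set.mem_prod, Set.mem_Iic]
  omega

theorem latticeCount_mono {α β : ℕ} (hα : 0 < α) (hβ : 0 < β) : Monotone (latticeCount α β) :=
  fun _ _ hW => Set.ncard_le_ncard (fun _ hp => le_trans hp hW) (finite_setOf_linear_le hα hβ _)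

def stairs (k : ℕ) (h : ℕ → ℕ) : Finset (ℕ × ℕ) :=
  ((range (k + 1)).sigma fun u => range (h (k - u))).map (Equiv.sigmaEquivProd ℕ ℕ).toEmbedding

theorem mem_stairs {k : ℕ} {h : ℕ → ℕ} {p : ℕ × ℕ} :
    p ∈ stairs k h ↔ p.1 ≤ k ∧ p.2 < h (k - p.1) := by
  simp [stairs]

theorem card_stairs (k : ℕ) (h : ℕ → ℕ) : #(stairs k h) = ∑ j ∈ range (k + 1), h j := by
  rw [stairs, card_map, card_sigma, ← sum_range_reflect h (k + 1)]
  simp only [card_range, Nat.add_sub_cancel]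

theorem sum_stairHeights (k B e : ℕ) (he : e ≤ k + 1) :
    ∑ j ∈ range (k + 1), (2 * j + B + if j < e then 1 else 0) = k * (k + 1) + B * (k + 1) + e := by
  have hfilter : (range (k + 1)).filter (· < e) = range e := by
    ext j; simp only [mem_filter, mem_range]; omega
  have hid := sum_range_id_mul_two (k + 1)
  rw [Nat.add_sub_cancel] at hid
  rw [sum_add_distrib, sum_add_distrib, ← mul_sum, sum_boole, hfilter, sum_const, card_range,
    card_range, smul_eq_mul, Nat.cast_id]
  linarith

def oddTriangles (P : ℕ) : Fin 3 → ℕ :=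
  ![(P + 1) * (2 * P + 1), (P + 1) * (2 * P + 3), (P + 2) * (2 * P + 3)]

theorem triangles_two_mul_add_one (P : ℕ) :
    ![t (2 * P + 1), t (2 * P + 1 + 1), t (2 * P + 1 + 2)] = oddTriangles P := by
  have ht : ∀ n m, n * (n + 1) = m * 2 → t n = m := fun n m h => by
    rw [t, h, Nat.mul_div_cancel _ two_pos]
  rw [ht _ ((P + 1) * (2 * P + 1)) (by ring), ht _ ((P + 1) * (2 * P + 3)) (by ring),
    ht _ ((P + 2) * (2 * P + 3)) (by ring), oddTriangles]

theorem oddTriangles_pos (P : ℕ) (j : Fin 3) : 0 < oddTriangles P j := by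
  fin_cases j <;> simp [oddTriangles]

theorem exists_oddTriangles_decomposition (P : ℕ) (m : ℤ) :
    ∃ x₀ ≤ 2 * P + 2, ∃ z₀ ≤ P, ∃ W : ℤ,
      m = (P + 1) * (2 * P + 1) * x₀ + (P + 2) * (2 * P + 3) * z₀ + (P + 1) * (2 * P + 3) * W := by
  have hp : (0 : ℤ) < 2 * P + 3 := by positivity
  have hq : (0 : ℤ) < P + 1 := by positivity
  obtain ⟨x₀, hx₀⟩ := Int.eq_ofNat_of_zero_le (Int.emod_nonneg m hp.ne')
  obtain ⟨z₀, hz₀⟩ := Int.eq_ofNat_of_zero_le (Int.emod_nonneg m hq.ne')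
  have hx₀lt := Int.emod_lt_of_pos m hp
  have hz₀lt := Int.emod_lt_of_pos m hq
  have hmp := Int.mul_ediv_add_emod m (2 * P + 3)
  have hmq := Int.mul_ediv_add_emod m (P + 1)
  rw [hx₀] at hx₀lt hmp
  rw [hz₀] at hz₀lt hmq
  have hdvd_p : (2 * P + 3 : ℤ) ∣ m - (P + 1) * (2 * P + 1) * x₀ - (P + 2) * (2 * P + 3) * z₀ :=
    ⟨m / (2 * P + 3) - P * x₀ - (P + 2) * z₀, by linear_combination -hmp⟩
  have hdvd_q : (P + 1 : ℤ) ∣ m - (P + 1) * (2 * P + 1) * x₀ - (P + 2) * (2 * P + 3) * z₀ :=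
    ⟨m / (P + 1) - (2 * P + 1) * x₀ - (2 * P + 5) * z₀, by linear_combination -hmq⟩
  have hcop : IsCoprime (P + 1 : ℤ) (2 * P + 3) := ⟨-2, 1, by ring⟩
  obtain ⟨W, hW⟩ := hcop.mul_dvd hdvd_q hdvd_p
  exact ⟨x₀, by omega, z₀, by omega, W, by linear_combination hW⟩

theorem oddTriangles_rep_shape {P x₀ z₀ x y z : ℕ} {W : ℤ} (hx₀ : x₀ ≤ 2 * P + 2)
    (hz₀ : z₀ ≤ P)
    (h : ((P + 1) * (2 * P + 1) * x + (P + 1) * (2 * P + 3) * y + (P + 2) * (2 * P + 3) * z : ℤ)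
      = (P + 1) * (2 * P + 1) * x₀ + (P + 2) * (2 * P + 3) * z₀ + (P + 1) * (2 * P + 3) * W) :
    ∃ u v : ℕ, x = x₀ + (2 * P + 3) * u ∧ z = z₀ + (P + 1) * v ∧
      (y : ℤ) = W - (2 * P + 1) * u - (P + 2) * v := by
  obtain ⟨u, rfl⟩ := exists_eq_add_mul_of_dvd_sub (x := x) (by omega : x₀ < 2 * P + 3)
    ⟨(P + 1) * (W - y) - (P + 2) * (z - z₀) - P * (x - x₀), by push_cast; linear_combination h⟩
  push_cast at h
  obtain ⟨v, rfl⟩ := exists_eq_add_mul_of_dvd_sub (x := z) (by omega : z₀ < P + 1)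
    ⟨(2 * P + 3) * (W - y - (2 * P + 1) * u) - (2 * P + 5) * (z - z₀),
      by push_cast; linear_combination h⟩
  refine ⟨u, v, rfl, rfl, ?_⟩
  have hb : ((P + 1) * (2 * P + 3) : ℤ) ≠ 0 := by positivity
  apply mul_left_cancel₀ hb
  push_cast at h
  linear_combination h

theorem repCountZ_oddTriangles {P x₀ z₀ : ℕ} (hx₀ : x₀ ≤ 2 * P + 2) (hz₀ : z₀ ≤ P) (W m : ℤ)
    (hm : m = (P + 1) * (2 * P + 1) * x₀ + (P + 2) * (2 * P + 3) * z₀ + (P + 1) * (2 * P + 3) * W) :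
    repCountZ (oddTriangles P) m = latticeCount (2 * P + 1) (P + 2) W := by
  unfold repCountZ
  split_ifs with hm₀
  · let f : ℕ × ℕ → Fin 3 → ℕ := fun p =>
      ![x₀ + (2 * P + 3) * p.1, (W - (2 * P + 1) * p.1 - (P + 2) * p.2).toNat, z₀ + (P + 1) * p.2]
    have hf : Function.Injective f := fun p q h => by
      have h₀ := congrFun h 0
      have h₂ := congrFun h 2
      simp only [f, Matrix.cons_val_zero, Matrix.cons_val_two, Matrix.tail_cons,
        Matrix.head_cons] at h₀ h₂
      exact Prod.ext (by nlinarith) (by nlinarith)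
    rw [repCount_eq_ncard _ (oddTriangles_pos P), latticeCount, ← Set.ncard_image_of_injective _ hf]
    congr 1
    ext x
    simp only [Set.mem_ofPred_eq, Set.mem_image, Fin.sum_univ_three, oddTriangles,
      Matrix.cons_val_zero, Matrix.cons_val_one, Matrix.cons_val_two, Matrix.tail_cons,
      Matrix.head_cons]
    constructor
    · intro hx
      have hx' : ((P + 1) * (2 * P + 1) * x 0 + (P + 1) * (2 * P + 3) * x 1
          + (P + 2) * (2 * P + 3) * x 2 : ℤ) = m := by
        rw [← Int.toNat_of_nonneg hm₀]; exact_mod_cast hx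
      obtain ⟨u, v, hu, hv, hy⟩ := oddTriangles_rep_shape hx₀ hz₀ (hx'.trans hm)
      refine ⟨(u, v), by push_cast; linarith [(x 1).cast_nonneg (α := ℤ)], ?_⟩
      ext j
      fin_cases j <;> simp [f, hu, hv, ← hy]
    · rintro ⟨⟨u, v⟩, huv, rfl⟩
      simp only [f, Matrix.cons_val_zero, Matrix.cons_val_one, Matrix.cons_val_two,
        Matrix.tail_cons, Matrix.head_cons]
      push_cast at huv
      zify
      rw [Int.toNat_of_nonneg hm₀, Int.toNat_of_nonneg (by linarith)]
      linear_combination -hm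
  · have hW : W < 0 := by
      by_contra! hW
      have : (0 : ℤ) ≤ (P + 1) * (2 * P + 1) * x₀ + (P + 2) * (2 * P + 3) * z₀ := by positivity
      have : (0 : ℤ) ≤ (P + 1) * (2 * P + 3) * W := mul_nonneg (by positivity) hW
      omega
    have hempty : {p : ℕ × ℕ | ((((2 * P + 1) * p.1 + (P + 2) * p.2 : ℕ)) : ℤ) ≤ W} = ∅ :=
      Set.eq_empty_of_forall_notMem fun p hp => by
        simp only [Set.mem_ofPred_eq] at hp; omega
    rw [latticeCount, hempty, Set.ncard_empty]

theorem genFrob_oddTriangles {P s : ℕ} {V : ℤ}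
    (hle : latticeCount (2 * P + 1) (P + 2) (V - 1) ≤ s)
    (hlt : s < latticeCount (2 * P + 1) (P + 2) V) :
    genFrob (oddTriangles P) s =
      (P + 1) * (2 * P + 1) * (2 * P + 2) + (P + 2) * (2 * P + 3) * P
        + (P + 1) * (2 * P + 3) * (V - 1) := by
  apply IsGreatest.csSup_eq
  refine ⟨?_, fun m hm => ?_⟩
  · show repCountZ _ _ ≤ s
    rwa [repCountZ_oddTriangles le_rfl le_rfl (V - 1) _ (by push_cast; ring)]
  · obtain ⟨x₀, hx₀, z₀, hz₀, W, rfl⟩ := exists_oddTriangles_decomposition P m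
    have hW : W ≤ V - 1 := by
      by_contra! hW
      have hmono := latticeCount_mono (by omega : 0 < 2 * P + 1) (by omega : 0 < P + 2)
        (show V ≤ W by omega)
      rw [Set.mem_ofPred_eq, repCountZ_oddTriangles hx₀ hz₀ W _ rfl] at hm
      omega
    have hx₀' : (x₀ : ℤ) ≤ 2 * P + 2 := by exact_mod_cast hx₀
    have hz₀' : (z₀ : ℤ) ≤ P := by exact_mod_cast hz₀
    gcongr

section Staircase

variable {P k B e : ℕ}

theorem mem_stairs_of_lt (h3k : 3 * k ≤ P + 1) (hBe : B * (P + 2) + 3 * e < 2 * P + 2)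
    (he : e ≤ k) {u v : ℕ}
    (h : (2 * P + 1) * u + (P + 2) * v < k * (2 * P + 1) + B * (P + 2) + 3 * e) :
    (u, v) ∈ stairs k fun j => 2 * j + B + if j < e then 1 else 0 := by
  have hu : u ≤ k := by
    by_contra! hu
    nlinarith [Nat.mul_le_mul_left (2 * P + 1) hu]
  obtain ⟨j, rfl⟩ : ∃ j, k = u + j := ⟨k - u, by omega⟩
  refine mem_stairs.mpr ⟨hu, ?_⟩
  rw [Nat.add_sub_cancel_left]
  by_contra! hv
  have hv' := Nat.mul_le_mul_left (P + 2) hv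
  split_ifs at hv' <;> linarith

theorem le_of_mem_stairs (h3k : 3 * k ≤ P + 1) {u v : ℕ}
    (h : (u, v) ∈ stairs k fun j => 2 * j + B + if j < e + 1 then 1 else 0) :
    (2 * P + 1) * u + (P + 2) * v ≤ k * (2 * P + 1) + B * (P + 2) + 3 * e := by
  obtain ⟨hu, hv⟩ := mem_stairs.mp h
  obtain ⟨j, rfl⟩ : ∃ j, k = u + j := ⟨k - u, by omega⟩
  dsimp only at hv
  rw [Nat.add_sub_cancel_left] at hv
  have hv' := Nat.mul_le_mul_left (P + 2) (Nat.add_one_le_of_lt hv)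
  split_ifs at hv' <;> linarith

theorem latticeCount_pred_le (h3k : 3 * k ≤ P + 1) (hBe : B * (P + 2) + 3 * e < 2 * P + 2)
    (he : e ≤ k) :
    latticeCount (2 * P + 1) (P + 2) ((k * (2 * P + 1) + B * (P + 2) + 3 * e : ℕ) - 1)
      ≤ k * (k + 1) + B * (k + 1) + e :=
  calc _ ≤ #(stairs k fun j => 2 * j + B + if j < e then 1 else 0) := by
        rw [latticeCount, ← Set.ncard_coe_finset]
        refine Set.ncard_le_ncard (fun ⟨u, v⟩ huv => mem_stairs_of_lt h3k hBe he ?_)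
          (finite_toSet _)
        simp only [Set.mem_ofPred_eq] at huv
        omega
    _ = _ := by rw [card_stairs, sum_stairHeights _ _ _ (by omega)]

theorem lt_latticeCount (h3k : 3 * k ≤ P + 1) (he : e ≤ k) :
    k * (k + 1) + B * (k + 1) + e
      < latticeCount (2 * P + 1) (P + 2) (k * (2 * P + 1) + B * (P + 2) + 3 * e : ℕ) :=
  calc _ < #(stairs k fun j => 2 * j + B + if j < e + 1 then 1 else 0) := by
        rw [card_stairs, sum_stairHeights _ _ _ (by omega)]
        omega
    _ ≤ _ := by
        rw [latticeCount, ← Set.ncard_coe_finset]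
        refine Set.ncard_le_ncard (fun ⟨u, v⟩ huv => ?_)
          (finite_setOf_linear_le (by omega) (by omega) _)
        simp only [Set.mem_ofPred_eq, Nat.cast_le]
        exact le_of_mem_stairs h3k huv

end Staircase

theorem genFrob_oddTriangles_staircase {P k B e : ℕ} (h3k : 3 * k ≤ P + 1)
    (hBe : B * (P + 2) + 3 * e < 2 * P + 2) (he : e ≤ k) :
    genFrob (oddTriangles P) (k * (k + 1) + B * (k + 1) + e) =
      (P + 1) * (2 * P + 1) * (2 * P + 2) + (P + 2) * (2 * P + 3) * P
        + (P + 1) * (2 * P + 3) * ((k * (2 * P + 1) + B * (P + 2) + 3 * e : ℕ) - 1 : ℤ) :=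
  genFrob_oddTriangles (latticeCount_pred_le h3k hBe he) (lt_latticeCount h3k he)

theorem six_mul_sub_three_le_NOdd (k i : ℕ) : 6 * (k : ℤ) - 3 ≤ NOdd (k * (k + 1) + i) := by
  have : 2 * k + 1 ≤ Nat.sqrt (4 * (k * (k + 1) + i) + 5) := Nat.le_sqrt.mpr (by nlinarith)
  unfold NOdd
  omega

theorem NOdd_mul_succ_add_two_mul_add_one (k : ℕ) :
    NOdd (k * (k + 1) + (2 * k + 1)) = 6 * k + 3 := by
  have : Nat.sqrt (4 * (k * (k + 1) + (2 * k + 1)) + 5) = 2 * k + 3 := by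
    rw [show 4 * (k * (k + 1) + (2 * k + 1)) + 5 = (2 * k + 3) * (2 * k + 3) by ring, Nat.sqrt_eq]
  unfold NOdd
  omega

/-- writing `s = k(k+1) + i` with `0 ≤ i ≤ 2k+1`, for odd `n > N_s^odd`,
`g(t_n, t_{n+1}, t_{n+2}; s) = ((n+1)(n+2)/4)((x_s^odd + 2y_s^odd + 3)n + 3(x_s^odd - 1)) - 1`. -/
theorem stmt_7 (s k i n : ℕ) (hi : i ≤ 2 * k + 1) (hs : s = k * (k + 1) + i)
    (hn : Odd n) (hbound : (n : ℤ) > NOdd s) :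
    genFrob ![t n, t (n + 1), t (n + 2)] s =
      ((n : ℤ) + 1) * ((n : ℤ) + 2) *
        (((xOddN k i : ℤ) + 2 * (yOddN k i : ℤ) + 3) * (n : ℤ) + 3 * ((xOddN k i : ℤ) - 1)) / 4
        - 1 := by
  obtain ⟨P, rfl⟩ := hn
  subst hs
  have h3k : 3 * k ≤ P + 1 := by have := six_mul_sub_three_le_NOdd k i; push_cast at hbound; omega
  rw [triangles_two_mul_add_one, eq_sub_iff_add_eq, eq_comm]
  apply Int.ediv_eq_of_eq_mul_left four_ne_zero
  rcases le_or_gt i k with hik | hki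
  · have hx : xOddN k i = 2 * i := if_pos hik
    have hy : yOddN k i = k - i := if_pos hik
    rw [show k * (k + 1) + i = k * (k + 1) + 0 * (k + 1) + i by ring,
      genFrob_oddTriangles_staircase h3k (by omega) hik, hx, hy]
    push_cast [hik]
    ring
  · obtain ⟨e, rfl⟩ : ∃ e, i = k + 1 + e := ⟨i - (k + 1), by omega⟩
    have hx : xOddN k (k + 1 + e) = 2 * e + 1 := by unfold xOddN; split_ifs <;> omega
    have hy : yOddN k (k + 1 + e) = k - e := by unfold yOddN; split_ifs <;> omega
    have hBe : 1 * (P + 2) + 3 * e < 2 * P + 2 := by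
      rcases (show e ≤ k by omega).lt_or_eq with hek | hek
      · omega
      · subst hek
        rw [show e + 1 + e = 2 * e + 1 by ring, NOdd_mul_succ_add_two_mul_add_one] at hbound
        push_cast at hbound
        omega
    rw [show k * (k + 1) + (k + 1 + e) = k * (k + 1) + 1 * (k + 1) + e by ring,
      genFrob_oddTriangles_staircase h3k hBe (by omega), hx, hy]
    push_cast [show e ≤ k by omega]
    ring
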